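/- arXiv:1512.02386 — 4 statements merged into one kernel-verified Lean document; each statement's English description precedes it below -/
import Mathlib

section
/- Let R be an associative unital ring in which 2 is invertible, equipped with two derivations ∂ₓ and ∂ₜ. Let φ ∈ R be a unit such that ∂ₓφ is a unit and φ satisfies the non-Abelian KdV singularity manifold equation ∂ₜφ = (∂ₓφ)·{φ; x}. Then ψ := φ⁻¹ satisfies: ∂ₓψ is a unit and ∂ₜψ = (∂ₓψ)·{ψ; x}, i.e., the non-Abelian KdV singularity manifold equation is invariant under the transformation φ ↦ φ⁻¹. -/
/-- A (not necessarily commutative) derivation on a ring: an additive map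
satisfying the Leibniz rule. -/
def IsDeriv {R : Type*} [Ring R] (d : R → R) : Prop :=
  (∀ a b, d (a + b) = d a + d b) ∧ (∀ a b, d (a * b) = d a * b + a * d b)

/-- The non-Abelian Schwarzian derivative. -/
noncomputable def schw {R : Type*} [Ring R] [Invertible (2 : R)] (d : R → R) (φ : R) : R :=
  d (Ring.inverse (d φ) * d (d φ)) - ⅟(2 : R) * (Ring.inverse (d φ) * d (d φ)) ^ 2

/-- The non-Abelian KdV singularity manifold equation `∂ₜφ = (∂ₓφ)·{φ; x}`. -/
noncomputable def KdVSing {R : Type*} [Ring R] [Invertible (2 : R)]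
    (dx dt : R → R) (φ : R) : Prop :=
  dt φ = dx φ * schw dx φ

section Helpers
variable {R : Type*} [Ring R]

lemma IsDeriv.zero' {d : R → R} (hd : IsDeriv d) : d 0 = 0 := by
  have h := hd.1 0 0
  simpa using h.symm

lemma IsDeriv.neg' {d : R → R} (hd : IsDeriv d) (x : R) : d (-x) = -d x := by
  have h := hd.1 x (-x)
  rw [add_neg_cancel, hd.zero'] at h
  exact (eq_neg_of_add_eq_zero_right h.symm)

lemma IsDeriv.sub' {d : R → R} (hd : IsDeriv d) (x y : R) : d (x - y) = d x - d y := by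
  rw [sub_eq_add_neg, hd.1, hd.neg', sub_eq_add_neg]

lemma IsDeriv.one' {d : R → R} (hd : IsDeriv d) : d 1 = 0 := by
  have h := hd.2 1 1
  rw [mul_one, mul_one, one_mul] at h
  nth_rewrite 1 [← add_zero (d 1)] at h
  exact (add_left_cancel h).symm

lemma inverse_eq {a b : R} (h1 : a * b = 1) (h2 : b * a = 1) : Ring.inverse a = b :=
  Ring.inverse_unit ⟨a, b, h1, h2⟩

lemma deriv_inverse {d : R → R} (hd : IsDeriv d) {a : R} (ha : IsUnit a) :
    d (Ring.inverse a) = -(Ring.inverse a * (d a * Ring.inverse a)) := by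
  set b := Ring.inverse a with hb
  have hab : a * b = 1 := Ring.mul_inverse_cancel a ha
  have hba : b * a = 1 := Ring.inverse_mul_cancel a ha
  have h := hd.2 a b
  rw [hab, hd.one'] at h
  have h2 : a * d b = -(d a * b) := eq_neg_of_add_eq_zero_right h.symm
  calc d b = b * (a * d b) := by rw [← mul_assoc, hba, one_mul]
    _ = -(b * (d a * b)) := by rw [h2, mul_neg]

lemma half_smul_add [Invertible (2 : R)] (x : R) : ⅟(2:R) * (x + x) = x := by
  rw [← two_mul, ← mul_assoc, invOf_mul_self, one_mul]

lemma half_distrib [Invertible (2 : R)] (A B C D : R) :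
    ⅟(2:R) * (A - (B + B) - (C + C) + (D + D + (D + D)))
      = ⅟(2:R) * A - B - C + (D + D) := by
  rw [mul_add, mul_sub, mul_sub, half_smul_add, half_smul_add, half_smul_add]

lemma half_comm [Invertible (2 : R)] (x : R) : ⅟(2:R) * x = x * ⅟(2:R) := by
  have h2 : (2:R) * x = x * 2 := by rw [two_mul, mul_two]
  calc ⅟(2:R) * x = ⅟(2:R) * (x * (2 * ⅟(2:R))) := by rw [mul_invOf_self, mul_one]
    _ = ⅟(2:R) * ((x * 2) * ⅟(2:R)) := by rw [mul_assoc]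
    _ = ⅟(2:R) * ((2 * x) * ⅟(2:R)) := by rw [h2]
    _ = (⅟(2:R) * 2) * (x * ⅟(2:R)) := by rw [mul_assoc, mul_assoc]
    _ = x * ⅟(2:R) := by rw [invOf_mul_self, one_mul]

end Helpers

theorem stmt_1 {R : Type*} [Ring R] [Invertible (2 : R)]
    (dx dt : R → R) (hdx : IsDeriv dx) (hdt : IsDeriv dt)
    (φ : R) (hφ : IsUnit φ) (hφx : IsUnit (dx φ)) (hkdv : KdVSing dx dt φ) :
    IsUnit (dx (Ring.inverse φ)) ∧ KdVSing dx dt (Ring.inverse φ) := by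
  set b := Ring.inverse φ with hbdef
  have hab : φ * b = 1 := Ring.mul_inverse_cancel φ hφ
  have hba : b * φ = 1 := Ring.inverse_mul_cancel φ hφ
  set u := dx φ with hu
  set ui := Ring.inverse u with huidef
  have huui : u * ui = 1 := Ring.mul_inverse_cancel u hφx
  have huiu : ui * u = 1 := Ring.inverse_mul_cancel u hφx
  have c1 : ∀ x : R, φ * (b * x) = x := fun x => by rw [← mul_assoc, hab, one_mul]
  have c2 : ∀ x : R, b * (φ * x) = x := fun x => by rw [← mul_assoc, hba, one_mul]
  have c3 : ∀ x : R, u * (ui * x) = x := fun x => by rw [← mul_assoc, huui, one_mul]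
  have c4 : ∀ x : R, ui * (u * x) = x := fun x => by rw [← mul_assoc, huiu, one_mul]
  have hdb : dx b = -(b * (u * b)) := deriv_inverse hdx hφ
  set u1 := dx u with hu1
  -- inverse of dx b
  have hv1 : (-(b * (u * b))) * (-(φ * (ui * φ))) = 1 := by
    rw [neg_mul_neg]
    simp only [mul_assoc, c1, c2, c3, c4]
    exact hba
  have hv2 : (-(φ * (ui * φ))) * (-(b * (u * b))) = 1 := by
    rw [neg_mul_neg]
    simp only [mul_assoc, c1, c2, c3, c4]
    exact hab
  have hdxb_unit : IsUnit (dx b) := by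
    rw [hdb]; exact ⟨⟨_, -(φ * (ui * φ)), hv1, hv2⟩, rfl⟩
  refine ⟨hdxb_unit, ?_⟩
  have hvinv : Ring.inverse (dx b) = -(φ * (ui * φ)) := by
    rw [hdb]; exact inverse_eq hv1 hv2
  have hddb : dx (dx b) = (b * (u * (b * (u * b))) + b * (u * (b * (u * b)))) - b * (u1 * b) := by
    rw [hdb, hdx.neg', hdx.2 b (u * b), hdx.2 u b, hdb, ← hu1]
    noncomm_ring
  have hW : Ring.inverse (dx b) * dx (dx b) = φ * ((ui * u1) * b) - (u * b + u * b) := by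
    rw [hvinv, hddb]
    simp only [neg_mul, mul_sub, mul_add, mul_assoc, c1, c2, c3, c4]
    noncomm_ring
  set w1 := dx (ui * u1) with hw1
  have hW2 : (φ * ((ui * u1) * b) - (u * b + u * b)) * (φ * ((ui * u1) * b) - (u * b + u * b))
      = φ * ((ui * u1) * ((ui * u1) * b))
        - (φ * ((ui * u1) * (b * (u * b))) + φ * ((ui * u1) * (b * (u * b))))
        - (u1 * b + u1 * b)
        + (u * (b * (u * b)) + u * (b * (u * b)) + (u * (b * (u * b)) + u * (b * (u * b)))) := by
    simp only [sub_mul, mul_sub, add_mul, mul_add, mul_assoc, c1, c2, c3, c4]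
    noncomm_ring
  have hcφ : ∀ x : R, ⅟(2:R) * (φ * x) = φ * (⅟(2:R) * x) := fun x => by
    rw [← mul_assoc, half_comm φ, mul_assoc]
  have hschwb : schw dx b = φ * (schw dx φ) * b := by
    simp only [schw]
    simp only [← hu, ← huidef, ← hu1, ← hw1]
    rw [hW, pow_two, pow_two, hW2]
    rw [hdx.sub', hdx.1, hdx.2 φ ((ui * u1) * b), hdx.2 (ui * u1) b, hdx.2 u b, hdb]
    simp only [← hu, ← hu1, ← hw1]
    rw [half_distrib, hcφ]
    simp only [mul_sub, sub_mul, add_mul, mul_add, mul_neg, neg_mul, mul_assoc, c1, c2, c3, c4]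
    noncomm_ring
  have hdtb : dt b = -(b * (dt φ * b)) := deriv_inverse hdt hφ
  have hkdv' : dt φ = u * schw dx φ := hkdv
  show dt b = dx b * schw dx b
  rw [hdtb, hkdv', hdb, hschwb]
  simp only [neg_mul, mul_assoc, c1, c2, c3, c4]
end

section
/- Let R be an associative unital ring in which 2 is invertible, equipped with two derivations ∂ₓ and ∂ₜ. Let A, B, C ∈ R be constants (∂ₓ and ∂ₜ annihilate each of them) with A and B units of R. If φ ∈ R is such that ∂ₓφ is a unit and φ satisfies the non-Abelian KdV singularity manifold equation ∂ₜφ = (∂ₓφ)·{φ; x}, then ψ := A·φ·B + C satisfies: ∂ₓψ is a unit and ∂ₜψ = (∂ₓψ)·{ψ; x}. -/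
lemma my_deriv_one {R : Type*} [Ring R] {d : R → R} (hd : IsDeriv d) : d 1 = 0 := by
  have h := hd.2 1 1
  simp only [one_mul, mul_one] at h
  nth_rewrite 1 [← add_zero (d 1)] at h
  exact (add_left_cancel h).symm

lemma my_deriv_inv {R : Type*} [Ring R] {d : R → R} (hd : IsDeriv d)
    {u : R} (hu : IsUnit u) (h : d u = 0) : d (Ring.inverse u) = 0 := by
  have h1 : d (Ring.inverse u * u) = d 1 := by rw [Ring.inverse_mul_cancel _ hu]
  rw [hd.2, h, mul_zero, add_zero, my_deriv_one hd] at h1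
  have h2 : d (Ring.inverse u) * u * Ring.inverse u = 0 := by rw [h1, zero_mul]
  rwa [mul_assoc, Ring.mul_inverse_cancel _ hu, mul_one] at h2

theorem stmt_2 {R : Type*} [Ring R] [Invertible (2 : R)]
    (dx dt : R → R) (hdx : IsDeriv dx) (hdt : IsDeriv dt)
    (A B C : R)
    (hA : dx A = 0 ∧ dt A = 0) (hB : dx B = 0 ∧ dt B = 0) (hC : dx C = 0 ∧ dt C = 0)
    (hAu : IsUnit A) (hBu : IsUnit B)
    (φ : R) (hφx : IsUnit (dx φ)) (hkdv : KdVSing dx dt φ) :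
    IsUnit (dx (A * φ * B + C)) ∧ KdVSing dx dt (A * φ * B + C) := by
  set Bi := Ring.inverse B with hBi
  have hBB : Bi * B = 1 := Ring.inverse_mul_cancel _ hBu
  have hBB' : B * Bi = 1 := Ring.mul_inverse_cancel _ hBu
  set Ai := Ring.inverse A with hAi
  have hAA : Ai * A = 1 := Ring.inverse_mul_cancel _ hAu
  have hAA' : A * Ai = 1 := Ring.mul_inverse_cancel _ hAu
  have hdxBi : dx Bi = 0 := my_deriv_inv hdx hBu hB.1
  -- first derivative of ψ
  have hdψ : dx (A * φ * B + C) = A * dx φ * B := by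
    rw [hdx.1, hC.1, add_zero, hdx.2, hB.1, mul_zero, add_zero, hdx.2, hA.1, zero_mul,
      zero_add]
  have hdtψ : dt (A * φ * B + C) = A * dt φ * B := by
    rw [hdt.1, hC.2, add_zero, hdt.2, hB.2, mul_zero, add_zero, hdt.2, hA.2, zero_mul,
      zero_add]
  have hψu : IsUnit (dx (A * φ * B + C)) := by
    rw [hdψ]; exact (hAu.mul hφx).mul hBu
  refine ⟨hψu, ?_⟩
  -- second derivative
  have hd2ψ : dx (dx (A * φ * B + C)) = A * dx (dx φ) * B := by
    rw [hdψ, hdx.2, hB.1, mul_zero, add_zero, hdx.2, hA.1, zero_mul, zero_add]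
  -- inverse of dψ
  have hinv : Ring.inverse (dx (A * φ * B + C)) = Bi * Ring.inverse (dx φ) * Ai := by
    rw [hdψ]
    have hu : IsUnit (A * dx φ * B) := (hAu.mul hφx).mul hBu
    have key : (A * dx φ * B) * (Bi * Ring.inverse (dx φ) * Ai) = 1 := by
      calc (A * dx φ * B) * (Bi * Ring.inverse (dx φ) * Ai)
          = A * (dx φ * ((B * Bi) * Ring.inverse (dx φ))) * Ai := by noncomm_ring
        _ = 1 := by
            rw [hBB', one_mul, Ring.mul_inverse_cancel _ hφx, mul_one, hAA']
    calc Ring.inverse (A * dx φ * B)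
        = Ring.inverse (A * dx φ * B) * ((A * dx φ * B) * (Bi * Ring.inverse (dx φ) * Ai)) := by
          rw [key, mul_one]
      _ = (Ring.inverse (A * dx φ * B) * (A * dx φ * B)) * (Bi * Ring.inverse (dx φ) * Ai) :=
          (mul_assoc _ _ _).symm
      _ = Bi * Ring.inverse (dx φ) * Ai := by rw [Ring.inverse_mul_cancel _ hu, one_mul]
  set w := Ring.inverse (dx φ) * dx (dx φ) with hw
  have hw' : Ring.inverse (dx (A * φ * B + C)) * dx (dx (A * φ * B + C)) = Bi * w * B := by
    rw [hinv, hd2ψ, hw]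
    calc Bi * Ring.inverse (dx φ) * Ai * (A * dx (dx φ) * B)
        = Bi * (Ring.inverse (dx φ) * ((Ai * A) * dx (dx φ))) * B := by noncomm_ring
      _ = Bi * (Ring.inverse (dx φ) * dx (dx φ)) * B := by rw [hAA, one_mul]
  -- schwarzian transforms by conjugation
  have hschw : schw dx (A * φ * B + C) = Bi * schw dx φ * B := by
    unfold schw
    rw [hw', ← hw]
    have h1 : dx (Bi * w * B) = Bi * dx w * B := by
      rw [hdx.2, hB.1, mul_zero, add_zero, hdx.2, hdxBi, zero_mul, zero_add]
    have h2 : (Bi * w * B) ^ 2 = Bi * w ^ 2 * B := by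
      rw [sq, sq]
      calc Bi * w * B * (Bi * w * B) = Bi * (w * ((B * Bi) * w)) * B := by noncomm_ring
        _ = Bi * (w * w) * B := by rw [hBB', one_mul]
    have h2c : Commute (2:R) Bi := by
      have h := (Commute.one_left Bi).add_left (Commute.one_left Bi)
      rwa [one_add_one_eq_two] at h
    have hcomm : (⅟(2:R)) * Bi = Bi * ⅟(2:R) := (h2c.invOf_left).eq
    have hc : Bi * (⅟(2:R) * w ^ 2) = ⅟(2:R) * (Bi * w ^ 2) := by
      rw [← mul_assoc, ← hcomm, mul_assoc]
    rw [h1, h2]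
    symm
    calc Bi * (dx w - ⅟(2:R) * w ^ 2) * B
        = Bi * dx w * B - Bi * (⅟(2:R) * w ^ 2) * B := by rw [mul_sub, sub_mul]
      _ = Bi * dx w * B - ⅟(2:R) * (Bi * w ^ 2) * B := by rw [hc]
      _ = Bi * dx w * B - ⅟(2:R) * (Bi * w ^ 2 * B) := by rw [mul_assoc (⅟(2:R))]
  show dt (A * φ * B + C) = dx (A * φ * B + C) * schw dx (A * φ * B + C)
  rw [hdtψ, hdψ, hschw, hkdv]
  calc A * (dx φ * schw dx φ) * B
      = A * (dx φ * ((B * Bi) * schw dx φ)) * B := by rw [hBB', one_mul]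
    _ = A * dx φ * B * (Bi * schw dx φ * B) := by noncomm_ring
end

section
/- Let R be an associative unital ring in which 2 is invertible, with a derivation ∂. Let φ ∈ R be a unit such that ∂φ is a unit, and set ψ := φ⁻¹ (so that ∂ψ = −φ⁻¹·(∂φ)·φ⁻¹ is a unit). Then the non-Abelian Schwarzian derivatives satisfy {ψ; x} = φ·{φ; x}·φ⁻¹. -/
/-!
Write `L` for the pre-Schwarzian `(∂φ)⁻¹ ∂²φ` of `φ`, `P := ∂φ · φ⁻¹` and `M := φ L φ⁻¹`.
The pre-Schwarzian of `φ⁻¹` is `M - 2P`. Conjugation by `φ` commutes with `∂` up to the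
commutator with `P`, and `∂P = PM - P²`; substituting these into `∂(M - 2P) - ½ (M - 2P)²`,
every term containing `P` cancels and `φ (∂L - ½ L²) φ⁻¹` remains. Doubling both sides first
turns this into an identity of noncommutative polynomials with integer coefficients.
-/

namespace IsDeriv

variable {R : Type*} [Ring R] {d : R → R}

def toAddMonoidHom (hd : IsDeriv d) : R →+ R := AddMonoidHom.mk' d hd.1

lemma map_neg (hd : IsDeriv d) (a : R) : d (-a) = -d a := hd.toAddMonoidHom.map_neg a

lemma map_sub (hd : IsDeriv d) (a b : R) : d (a - b) = d a - d b := hd.toAddMonoidHom.map_sub a b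

lemma map_two_mul (hd : IsDeriv d) (a : R) : d (2 * a) = 2 * d a := by
  rw [two_mul, two_mul, hd.1]

lemma map_one (hd : IsDeriv d) : d 1 = 0 := by
  simpa using hd.2 1 1

lemma map_mul₃ (hd : IsDeriv d) (a b c : R) :
    d (a * b * c) = d a * b * c + a * d b * c + a * b * d c := by
  rw [hd.2, hd.2, add_mul]

lemma map_units_inv (hd : IsDeriv d) (u : Rˣ) : d ↑u⁻¹ = -(↑u⁻¹ * d u * ↑u⁻¹) := by
  have h : d u * ↑u⁻¹ + u * d ↑u⁻¹ = 0 := by rw [← hd.2, Units.mul_inv, hd.map_one]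
  rw [← Units.inv_mul_cancel_left u (d ↑u⁻¹), eq_neg_of_add_eq_zero_right h]
  noncomm_ring

lemma map_conj (hd : IsDeriv d) (u : Rˣ) (x : R) :
    d (u * x * ↑u⁻¹) = u * d x * ↑u⁻¹ + d u * ↑u⁻¹ * (u * x * ↑u⁻¹)
      - u * x * ↑u⁻¹ * (d u * ↑u⁻¹) := by
  rw [hd.map_mul₃, hd.map_units_inv]
  simp only [mul_assoc, Units.inv_mul_cancel_left]
  noncomm_ring

end IsDeriv

section Preschwarzian

variable {R : Type*} [Ring R]

noncomputable def preschw (d : R → R) (φ : R) : R := Ring.inverse (d φ) * d (d φ)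

lemma two_mul_schw [Invertible (2 : R)] (d : R → R) (φ : R) :
    2 * schw d φ = 2 * d (preschw d φ) - preschw d φ ^ 2 := by
  rw [schw, mul_sub, mul_invOf_cancel_left, preschw]

lemma preschw_units_inv {d : R → R} (hd : IsDeriv d) (u : Rˣ) (hdu : IsUnit (d u)) :
    preschw d ↑u⁻¹ = u * preschw d u * ↑u⁻¹ - 2 * (d u * ↑u⁻¹) := by
  obtain ⟨v, hv⟩ := hdu
  have hinv : Ring.inverse (d ↑u⁻¹) = -(u * ↑v⁻¹ * u) := by
    rw [hd.map_units_inv, ← hv, ← Units.val_mul, ← Units.val_mul, ← Units.val_neg, Ring.inverse_unit]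
    simp [mul_assoc]
  rw [preschw, preschw, hinv, hd.map_units_inv, hd.map_neg, hd.map_mul₃, hd.map_units_inv, ← hv,
    Ring.inverse_unit]
  simp only [mul_assoc, neg_mul, mul_neg, neg_neg, mul_add, Units.mul_inv_cancel_left,
    Units.inv_mul_cancel_left]
  noncomm_ring

lemma map_deriv_mul_units_inv {d : R → R} (hd : IsDeriv d) (u : Rˣ) (hdu : IsUnit (d u)) :
    d (d u * ↑u⁻¹) = d u * ↑u⁻¹ * (u * preschw d u * ↑u⁻¹) - (d u * ↑u⁻¹) ^ 2 := by
  obtain ⟨v, hv⟩ := hdu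
  rw [hd.2, hd.map_units_inv, preschw, ← hv, Ring.inverse_unit]
  simp only [mul_assoc, Units.inv_mul_cancel_left, Units.mul_inv_cancel_left]
  noncomm_ring

end Preschwarzian

theorem stmt_3 {R : Type*} [Ring R] [Invertible (2 : R)]
    (d : R → R) (hd : IsDeriv d)
    (φ : R) (hφ : IsUnit φ) (hφx : IsUnit (d φ)) :
    schw d (Ring.inverse φ) = φ * schw d φ * Ring.inverse φ := by
  obtain ⟨u, rfl⟩ := hφ
  rw [Ring.inverse_unit]
  have hdouble : 2 * schw d ↑u⁻¹ = u * (2 * schw d u) * ↑u⁻¹ := by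
    rw [two_mul_schw, preschw_units_inv hd u hφx, hd.map_sub, hd.map_two_mul,
      hd.map_conj, map_deriv_mul_units_inv hd u hφx,
      two_mul_schw, mul_sub (u : R), sub_mul, ← Units.conj_pow]
    noncomm_ring
  calc schw d ↑u⁻¹ = ⅟2 * (2 * schw d ↑u⁻¹) := (invOf_mul_cancel_left 2 _).symm
    _ = ⅟2 * (2 * (u * schw d u * ↑u⁻¹)) := by rw [hdouble]; noncomm_ring
    _ = u * schw d u * ↑u⁻¹ := invOf_mul_cancel_left 2 _
end

section
/- Let R be an associative unital ring with a derivation ∂. Let φ ∈ R be a unit such that ∂φ is a unit, and set ψ := φ⁻¹. Then (∂ψ)⁻¹·∂²ψ = φ·(∂φ)⁻¹·(∂²φ)·φ⁻¹ − 2·(∂φ)·φ⁻¹. -/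
theorem stmt_4 {R : Type*} [Ring R]
    (d : R → R) (hd : IsDeriv d)
    (φ : R) (hφ : IsUnit φ) (hφx : IsUnit (d φ)) :
    Ring.inverse (d (Ring.inverse φ)) * d (d (Ring.inverse φ))
      = φ * Ring.inverse (d φ) * d (d φ) * Ring.inverse φ - 2 * d φ * Ring.inverse φ := by
  obtain ⟨hadd, hmul⟩ := hd
  set a := φ with ha
  set ai := Ring.inverse φ with hai
  set b := d φ with hb
  set bi := Ring.inverse (d φ) with hbi
  have h1 : a * ai = 1 := Ring.mul_inverse_cancel _ hφ
  have h2 : ai * a = 1 := Ring.inverse_mul_cancel _ hφ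
  have h3 : b * bi = 1 := Ring.mul_inverse_cancel _ hφx
  have h4 : bi * b = 1 := Ring.inverse_mul_cancel _ hφx
  have H1 : ∀ x : R, a * (ai * x) = x := fun x => by rw [← mul_assoc, h1, one_mul]
  have H2 : ∀ x : R, ai * (a * x) = x := fun x => by rw [← mul_assoc, h2, one_mul]
  have H3 : ∀ x : R, b * (bi * x) = x := fun x => by rw [← mul_assoc, h3, one_mul]
  have H4 : ∀ x : R, bi * (b * x) = x := fun x => by rw [← mul_assoc, h4, one_mul]
  have d1 : d 1 = 0 := by
    have h := hmul 1 1
    simp only [one_mul, mul_one] at h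
    exact (left_eq_add.mp h)
  have d0 : d 0 = 0 := by
    have h := hadd 0 0
    simp only [add_zero] at h
    exact (left_eq_add.mp h)
  have dneg : ∀ x : R, d (-x) = -(d x) := by
    intro x
    have h := hadd x (-x)
    rw [add_neg_cancel, d0] at h
    exact (neg_eq_of_add_eq_zero_right h.symm).symm
  have dai : d ai = -(ai * (b * ai)) := by
    have h := hmul a ai
    rw [h1, d1] at h
    have h' : a * d ai = -(d a * ai) := eq_neg_of_add_eq_zero_right (add_comm (d a * ai) (a * d ai) ▸ h.symm)
    calc d ai = ai * (a * d ai) := (H2 _).symm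
      _ = ai * (-(b * ai)) := by rw [h']
      _ = -(ai * (b * ai)) := by rw [mul_neg]
  -- inverse of d ai
  have hu1 : d ai * (-(a * (bi * a))) = 1 := by
    rw [dai, neg_mul_neg]
    simp only [mul_assoc, H1, H2, H3, H4]
    exact h2
  have hu2 : (-(a * (bi * a))) * d ai = 1 := by
    rw [dai, neg_mul_neg]
    simp only [mul_assoc, H1, H2, H3, H4]
    exact h1
  have hinv : Ring.inverse (d ai) = -(a * (bi * a)) :=
    Ring.inverse_unit ⟨d ai, -(a * (bi * a)), hu1, hu2⟩
  have k1 : d (d ai) = -(d ai * (b * ai) + ai * (d b * ai + b * d ai)) := by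
    conv_lhs => rw [dai]
    rw [dneg, hmul, hmul]
  rw [hinv, k1, dai]
  simp only [two_mul, mul_sub, sub_mul, mul_add, add_mul, neg_mul, mul_neg, neg_neg,
    neg_add, mul_assoc, H1, H2, H3, H4, mul_one, one_mul]
  abel
end
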